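/- arXiv:2206.09159 — 5 statements merged into one kernel-verified Lean document; each statement's English description precedes it below -/
import Mathlib

section
/- Assume n >= 2f+1 and the set D of dishonest players has exactly f elements. Then for every adversary assignment (w, u) satisfying (A1)-(A4): (IC1) any two honest players i, i' distinct from S have equal outputs, g([S], i) = g([S], i'); and (IC2) if moreover the initial primary S is honest, then g([S], i) = m_S for every honest player i ≠ S, where m_S = w([S], i) is S's common multicast value. That is, the quantum Byzantine agreement protocol reaches consensus with fault tolerance n >= 2f+1. -/
/-!
Write `b` and `t` for the numbers of backups and of dishonest backups of a route. Validity
follows from two invariants proved together by downward induction on the depth.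
Honest majority: if every honest backup accepts `v` and `2t < b`, every honest backup gathers
`v`, because its own entry and those of its honest children are `v` and form a majority; an
honest child is, by (A2), a route with honest primary on which every backup accepts `v`.
Honest primary: if the primary is honest, every backup accepts `v` and `2t ≤ b`, every honest
backup gathers `v`. For `2t < b` this is the first invariant; for `2t = b` the own entry and the
`t` dishonest children, which by (A3) fall under the first invariant with one dishonest backup
fewer, are a majority. With `n ≥ 2f + 1` the second invariant applies to `[S]` when `S` is honest.

For agreement when `S` is dishonest: as long as the dishonest backups still fit into the remaining
depth, two honest backups receive the same entry from each child, from an honest child its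
primary's value by the second invariant, from a dishonest child by induction; at the bottom no
dishonest backup is left, so every forwarded value is genuine.
-/

namespace QBA

/-- The majority function: returns the element of `M` occurring most often in `L`,
with ties broken by taking the least such element in the linear order,
and returning the default `d` on the empty list. -/
def maj {M : Type*} [LinearOrder M] (d : M) (L : List M) : M :=
  let s := L.toFinset.filter fun m => ∀ m' ∈ L.toFinset, L.count m' ≤ L.count m
  if h : s.Nonempty then s.min' h else d

/-- A route: a list of pairwise distinct players with head `S`
and length (depth) between `1` and `f`.  Its primary is its last entry,
and its backups are the players not occurring in it. -/
def IsRoute (n f : ℕ) (S : Fin n) (ζ : List (Fin n)) : Prop :=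
  ζ.Nodup ∧ ζ.head? = some S ∧ 1 ≤ ζ.length ∧ ζ.length ≤ f

/-- The primary (last entry) of `ζ` is honest (not in `D`). -/
def HonestPrimary {n : ℕ} (D : Finset (Fin n)) (ζ : List (Fin n)) : Prop :=
  ∀ q ∈ ζ.getLast?, q ∉ D

/-- An adversary assignment `(w, u)`: `w ζ i` is the message backup `i` accepts from
`ζ`'s primary, `u ζ j i` the message forwarder `j` forwards to verifier `i`,
subject to conditions (A1)–(A4). -/
structure Adversary (n f : ℕ) (S : Fin n) (D : Finset (Fin n)) (M : Type*) where
  w : List (Fin n) → Fin n → M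
  u : List (Fin n) → Fin n → Fin n → M
  A1 : ∀ ζ : List (Fin n), IsRoute n f S ζ → HonestPrimary D ζ →
    ∀ i i' : Fin n, i ∉ ζ → i' ∉ ζ → w ζ i = w ζ i'
  A2 : ∀ (ζ : List (Fin n)) (p : Fin n), IsRoute n f S ζ → p ∉ ζ → p ∉ D →
    IsRoute n f S (ζ ++ [p]) → ∀ i : Fin n, i ∉ ζ ++ [p] → w (ζ ++ [p]) i = w ζ p
  A3 : ∀ (ζ : List (Fin n)) (p : Fin n), IsRoute n f S ζ → HonestPrimary D ζ →
    p ∉ ζ → p ∈ D → IsRoute n f S (ζ ++ [p]) →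
    ∀ i : Fin n, i ∉ ζ ++ [p] → i ∉ D → w (ζ ++ [p]) i = w ζ p
  A4 : ∀ (ζ : List (Fin n)) (j i : Fin n), IsRoute n f S ζ → j ∉ ζ → i ∉ ζ → i ≠ j →
    (j ∉ D ∨ HonestPrimary D ζ) → u ζ j i = w ζ j

/-- Fuel-indexed gathering value; for a route `ζ` the fuel is `f - ζ.length`, so fuel `0`
corresponds to the bottom layer `ζ.length = f`. -/
def gAux {n f : ℕ} {S : Fin n} {D : Finset (Fin n)} {M : Type*} [LinearOrder M] [Inhabited M]
    (A : Adversary n f S D M) : ℕ → List (Fin n) → Fin n → M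
  | 0, ζ, i =>
      maj default (A.w ζ i ::
        (((List.finRange n).filter fun j => decide (j ∉ ζ ∧ j ≠ i)).map fun j => A.u ζ j i))
  | k + 1, ζ, i =>
      maj default (((List.finRange n).filter fun j => decide (j ∉ ζ)).map
        fun j => if j = i then A.w ζ i else gAux A k (ζ ++ [j]) i)

/-- The gathering value `g(ζ, i)` of an honest backup `i` of the route `ζ`,
defined by downward recursion on depth: at the bottom layer `ζ.length = f` it is the
majority of `w(ζ, i)` together with `u(ζ, j, i)` over all backups `j ≠ i` of `ζ`;
above the bottom layer it is the majority, over all backups `j` of `ζ`, of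
`g(ζ ++ [j], i)` (where the `j = i` entry is `w(ζ, i)`). -/
def g {n f : ℕ} {S : Fin n} {D : Finset (Fin n)} {M : Type*} [LinearOrder M] [Inhabited M]
    (A : Adversary n f S D M) (ζ : List (Fin n)) (i : Fin n) : M :=
  gAux A (f - ζ.length) ζ i

open Finset

section Majority

variable {M : Type*} [LinearOrder M]

theorem maj_perm (d : M) {L L' : List M} (h : L.Perm L') : maj d L = maj d L' := by
  simp only [maj, List.toFinset_eq_of_perm _ _ h, h.count_eq]

theorem count_add_count_le_length {α : Type*} [DecidableEq α] (L : List α) {a b : α}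
    (hab : a ≠ b) : L.count a + L.count b ≤ L.length := by
  induction L with
  | nil => simp
  | cons x L ih =>
    simp only [List.count_cons, List.length_cons, beq_iff_eq]
    grind

theorem maj_eq_of_length_lt_two_mul_count (d : M) {L : List M} {v : M}
    (hv : L.length < 2 * L.count v) : maj d L = v := by
  have hvL : v ∈ L.toFinset := by
    rw [List.mem_toFinset, ← List.count_pos_iff]
    omega
  have hlt : ∀ m ≠ v, L.count m < L.count v := fun m hm => by
    have := count_add_count_le_length L hm
    omega
  have hs : (L.toFinset.filter fun m => ∀ m' ∈ L.toFinset, L.count m' ≤ L.count m) = {v} := by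
    refine Finset.eq_singleton_iff_unique_mem.2 ⟨mem_filter.2 ⟨hvL, fun m' _ => ?_⟩, fun m hm => ?_⟩
    · rcases eq_or_ne m' v with rfl | hne
      · exact le_rfl
      · exact (hlt m' hne).le
    · by_contra hne
      exact (hlt m hne).not_ge ((mem_filter.1 hm).2 v hvL)
  simp only [maj, hs, Finset.singleton_nonempty, dif_pos, Finset.min'_singleton]

end Majority

section Routes

variable {n f : ℕ} {S : Fin n} {D : Finset (Fin n)}

def backups (ζ : List (Fin n)) : Finset (Fin n) := ζ.toFinsetᶜ

/-- The backups of `ζ` in the order in which `gAux` lists them. -/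
def backupList (ζ : List (Fin n)) : List (Fin n) :=
  (List.finRange n).filter fun j => decide (j ∉ ζ)

@[simp]
theorem mem_backups {ζ : List (Fin n)} {j : Fin n} : j ∈ backups ζ ↔ j ∉ ζ := by
  simp [backups]

@[simp]
theorem mem_backupList {ζ : List (Fin n)} {j : Fin n} : j ∈ backupList ζ ↔ j ∉ ζ := by
  simp [backupList]

theorem nodup_backupList (ζ : List (Fin n)) : (backupList ζ).Nodup :=
  (List.nodup_finRange n).filter _

theorem toFinset_backupList (ζ : List (Fin n)) : (backupList ζ).toFinset = backups ζ := by
  ext j; simp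

theorem backups_append_singleton (ζ : List (Fin n)) (j : Fin n) :
    backups (ζ ++ [j]) = (backups ζ).erase j := by
  ext m; simp [and_comm]

theorem card_backups_append_singleton {ζ : List (Fin n)} {j : Fin n} (hj : j ∉ ζ) :
    #(backups (ζ ++ [j])) = #(backups ζ) - 1 := by
  rw [backups_append_singleton, card_erase_of_mem (mem_backups.2 hj)]

theorem backups_append_singleton_inter_of_notMem (ζ : List (Fin n)) {j : Fin n} (hjD : j ∉ D) :
    backups (ζ ++ [j]) ∩ D = backups ζ ∩ D := by
  rw [backups_append_singleton, erase_inter, erase_eq_of_notMem fun h => hjD (mem_inter.1 h).2]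

theorem card_backups_append_singleton_inter_of_mem {ζ : List (Fin n)} {j : Fin n} (hj : j ∉ ζ)
    (hjD : j ∈ D) : #(backups (ζ ++ [j]) ∩ D) = #(backups ζ ∩ D) - 1 := by
  rw [backups_append_singleton, erase_inter,
    card_erase_of_mem (mem_inter.2 ⟨mem_backups.2 hj, hjD⟩)]

theorem isRoute_append_singleton {ζ : List (Fin n)} {j : Fin n} (hζ : IsRoute n f S ζ)
    (hj : j ∉ ζ) (hlen : ζ.length < f) : IsRoute n f S (ζ ++ [j]) := by
  obtain ⟨hnd, hhead, hpos, -⟩ := hζ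
  refine ⟨hnd.append (List.nodup_singleton j) (by simpa using hj), ?_, by simp, by simpa⟩
  rwa [List.head?_append_of_ne_nil _ (List.ne_nil_of_length_pos hpos)]

theorem honestPrimary_append_singleton (ζ : List (Fin n)) {j : Fin n} (hj : j ∉ D) :
    HonestPrimary D (ζ ++ [j]) := by
  simpa [HonestPrimary]

end Routes

section Counting

variable {n : ℕ} {M : Type*} [LinearOrder M]

theorem maj_map_backupList_eq (d : M) {ζ : List (Fin n)} {F : Fin n → M} {v : M}
    {G : Finset (Fin n)} (hG : G ⊆ backups ζ) (hF : ∀ j ∈ G, F j = v)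
    (hmaj : #(backups ζ) < 2 * #G) : maj d ((backupList ζ).map F) = v := by
  apply maj_eq_of_length_lt_two_mul_count
  have hlen : (backupList ζ).length = #(backups ζ) := by
    rw [← toFinset_backupList, List.toFinset_card_of_nodup (nodup_backupList ζ)]
  have hcount : #G ≤ ((backupList ζ).map F).count v := by
    rw [List.count_eq_countP, List.countP_map, List.countP_eq_length_filter,
      ← List.toFinset_card_of_nodup ((nodup_backupList ζ).filter _)]
    refine card_le_card fun j hj => ?_
    simp_all [← toFinset_backupList, subset_iff]
  rw [List.length_map, hlen]
  omega

theorem maj_map_backupList_eq_of_honest (d : M) {ζ : List (Fin n)} {D : Finset (Fin n)}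
    {F : Fin n → M} {v : M} (hmaj : 2 * #(backups ζ ∩ D) < #(backups ζ))
    (hF : ∀ j ∉ ζ, j ∉ D → F j = v) : maj d ((backupList ζ).map F) = v := by
  refine maj_map_backupList_eq d sdiff_subset (G := backups ζ \ D) (fun j hj => ?_) ?_
  · rw [mem_sdiff, mem_backups] at hj
    exact hF j hj.1 hj.2
  · have := card_sdiff_add_card_inter (backups ζ) D
    omega

theorem maj_map_backupList_eq_of_self_and_dishonest (d : M) {ζ : List (Fin n)}
    {D : Finset (Fin n)} {F : Fin n → M} {v : M} {i : Fin n} (hi : i ∉ ζ) (hiD : i ∉ D)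
    (hmaj : #(backups ζ) < 2 * (#(backups ζ ∩ D) + 1))
    (hF : ∀ j ∉ ζ, j = i ∨ j ∈ D → F j = v) : maj d ((backupList ζ).map F) = v := by
  refine maj_map_backupList_eq d (G := insert i (backups ζ ∩ D)) ?_ (fun j hj => ?_) ?_
  · exact insert_subset (mem_backups.2 hi) inter_subset_left
  · rcases mem_insert.1 hj with rfl | hj
    · exact hF j hi (Or.inl rfl)
    · rw [mem_inter, mem_backups] at hj
      exact hF j hj.1 (Or.inr hj.2)
  · rwa [card_insert_of_notMem fun h => hiD (mem_inter.1 h).2]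

end Counting

section Gathering

variable {n f : ℕ} {S : Fin n} {D : Finset (Fin n)} {M : Type*} (A : Adversary n f S D M)

theorem Adversary.ite_u_eq_w {ζ : List (Fin n)} {i j : Fin n} (hζ : IsRoute n f S ζ)
    (hi : i ∉ ζ) (hj : j ∉ ζ) (h : j ∉ D ∨ HonestPrimary D ζ) :
    (if j = i then A.w ζ i else A.u ζ j i) = A.w ζ j := by
  split_ifs with hji
  · rw [hji]
  · exact A.A4 ζ j i hζ hj hi (Ne.symm hji) h

variable [LinearOrder M] [Inhabited M]

theorem gAux_succ (k : ℕ) (ζ : List (Fin n)) (i : Fin n) :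
    gAux A (k + 1) ζ i = maj default ((backupList ζ).map fun j =>
      if j = i then A.w ζ i else gAux A k (ζ ++ [j]) i) :=
  rfl

theorem gAux_zero {ζ : List (Fin n)} {i : Fin n} (hi : i ∉ ζ) :
    gAux A 0 ζ i = maj default ((backupList ζ).map fun j =>
      if j = i then A.w ζ i else A.u ζ j i) := by
  set others := (List.finRange n).filter fun j => decide (j ∉ ζ ∧ j ≠ i)
  have hperm : (backupList ζ).Perm (i :: others) := by
    refine (List.perm_ext_iff_of_nodup (nodup_backupList ζ) ?_).2 fun j => ?_
    · exact List.nodup_cons.2 ⟨by simp [others], (List.nodup_finRange n).filter _⟩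
    · by_cases hji : j = i <;> simp [others, hji, hi]
  rw [maj_perm _ (hperm.map _), List.map_cons, if_pos rfl]
  refine congrArg (fun L => maj default (A.w ζ i :: L)) (List.map_congr_left fun j hj => ?_)
  simp only [List.mem_filter, decide_eq_true_eq] at hj
  exact (if_neg hj.2.2).symm


def HonestMajorityValidity (k : ℕ) : Prop :=
  ∀ (ζ : List (Fin n)) (v : M), IsRoute n f S ζ → ζ.length + k = f →
    2 * #(backups ζ ∩ D) < #(backups ζ) → (∀ j ∉ ζ, j ∉ D → A.w ζ j = v) →
    ∀ i ∉ ζ, i ∉ D → gAux A k ζ i = v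

def HonestPrimaryValidity (k : ℕ) : Prop :=
  ∀ (ζ : List (Fin n)) (v : M), IsRoute n f S ζ → ζ.length + k = f →
    2 * #(backups ζ ∩ D) ≤ #(backups ζ) → HonestPrimary D ζ → (∀ j ∉ ζ, A.w ζ j = v) →
    ∀ i ∉ ζ, i ∉ D → gAux A k ζ i = v

variable {A}

theorem HonestPrimaryValidity.gAux_append {k : ℕ} (hP : HonestPrimaryValidity A k)
    {ζ : List (Fin n)} {j m : Fin n} (hζ : IsRoute n f S ζ) (hk : ζ.length + (k + 1) = f)
    (hmaj : 2 * #(backups ζ ∩ D) < #(backups ζ)) (hj : j ∉ ζ) (hjD : j ∉ D)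
    (hm : m ∉ ζ) (hmj : m ≠ j) (hmD : m ∉ D) : gAux A k (ζ ++ [j]) m = A.w ζ j := by
  have hζj := isRoute_append_singleton hζ hj (by omega)
  refine hP _ _ hζj (by simp; omega) ?_ (honestPrimary_append_singleton ζ hjD)
    (fun m' hm' => A.A2 ζ j hζ hj hjD hζj m' hm') m (by simp [hm, hmj]) hmD
  rw [backups_append_singleton_inter_of_notMem ζ hjD, card_backups_append_singleton hj]
  omega

theorem HonestMajorityValidity.gAux_append {k : ℕ} (hQ : HonestMajorityValidity A k)
    {ζ : List (Fin n)} {j m : Fin n} (hζ : IsRoute n f S ζ) (hk : ζ.length + (k + 1) = f)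
    (hmaj : 2 * #(backups ζ ∩ D) ≤ #(backups ζ)) (hp : HonestPrimary D ζ) (hj : j ∉ ζ)
    (hjD : j ∈ D) (hm : m ∉ ζ) (hmj : m ≠ j) (hmD : m ∉ D) :
    gAux A k (ζ ++ [j]) m = A.w ζ j := by
  have hζj := isRoute_append_singleton hζ hj (by omega)
  refine hQ _ _ hζj (by simp; omega) ?_
    (fun m' hm' hm'D => A.A3 ζ j hζ hp hj hjD hζj m' hm' hm'D) m (by simp [hm, hmj]) hmD
  have hpos : 0 < #(backups ζ ∩ D) := card_pos.2 ⟨j, mem_inter.2 ⟨mem_backups.2 hj, hjD⟩⟩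
  rw [card_backups_append_singleton_inter_of_mem hj hjD, card_backups_append_singleton hj]
  omega

variable (A)

theorem honestMajorityValidity_zero : HonestMajorityValidity A 0 := by
  intro ζ v hζ _ hmaj hv i hi hiD
  rw [gAux_zero A hi]
  refine maj_map_backupList_eq_of_honest _ hmaj fun j hj hjD => ?_
  rw [A.ite_u_eq_w hζ hi hj (Or.inl hjD), hv j hj hjD]

theorem honestPrimaryValidity_zero : HonestPrimaryValidity A 0 := by
  intro ζ v hζ _ _ hp hv i hi _
  rw [gAux_zero A hi]
  refine maj_map_backupList_eq _ subset_rfl (fun j hj => ?_) ?_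
  · rw [A.ite_u_eq_w hζ hi (mem_backups.1 hj) (Or.inr hp), hv j (mem_backups.1 hj)]
  · have : 0 < #(backups ζ) := card_pos.2 ⟨i, mem_backups.2 hi⟩
    omega

variable {A}

theorem HonestPrimaryValidity.honestMajorityValidity_succ {k : ℕ}
    (hP : HonestPrimaryValidity A k) : HonestMajorityValidity A (k + 1) := by
  intro ζ v hζ hk hmaj hv i hi hiD
  rw [gAux_succ]
  refine maj_map_backupList_eq_of_honest _ hmaj fun j hj hjD => ?_
  split_ifs with hji
  · exact hv i hi hiD
  · rw [hP.gAux_append hζ hk hmaj hj hjD hi (Ne.symm hji) hiD, hv j hj hjD]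

theorem HonestMajorityValidity.honestPrimaryValidity_succ {k : ℕ}
    (hQ : HonestMajorityValidity A k) (hQ' : HonestMajorityValidity A (k + 1)) :
    HonestPrimaryValidity A (k + 1) := by
  intro ζ v hζ hk hmaj hp hv i hi hiD
  by_cases hlt : 2 * #(backups ζ ∩ D) < #(backups ζ)
  · exact hQ' ζ v hζ hk hlt (fun j hj _ => hv j hj) i hi hiD
  rw [gAux_succ]
  refine maj_map_backupList_eq_of_self_and_dishonest _ hi hiD (by omega) fun j hj hji => ?_
  split_ifs with hji'
  · exact hv i hi
  · rw [hQ.gAux_append hζ hk hmaj hp hj (hji.resolve_left hji') hi (Ne.symm hji') hiD, hv j hj]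

variable (A)

theorem honestPrimaryValidity (k : ℕ) : HonestPrimaryValidity A k := by
  suffices HonestMajorityValidity A k ∧ HonestPrimaryValidity A k from this.2
  induction k with
  | zero => exact ⟨honestMajorityValidity_zero A, honestPrimaryValidity_zero A⟩
  | succ k ih =>
    have hQ := ih.2.honestMajorityValidity_succ
    exact ⟨hQ, ih.1.honestPrimaryValidity_succ hQ⟩

theorem gAux_agree (k : ℕ) {ζ : List (Fin n)} (hζ : IsRoute n f S ζ) (hk : ζ.length + k = f)
    (hdepth : #(backups ζ ∩ D) ≤ k) (hmaj : 2 * #(backups ζ ∩ D) < #(backups ζ))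
    {i i' : Fin n} (hi : i ∉ ζ) (hi' : i' ∉ ζ) (hiD : i ∉ D) (hi'D : i' ∉ D) :
    gAux A k ζ i = gAux A k ζ i' := by
  induction k generalizing ζ with
  | zero =>
    have hhonest : ∀ j ∉ ζ, j ∉ D := fun j hj hjD => notMem_empty j <|
      (card_eq_zero.1 (Nat.le_zero.1 hdepth)).subset (mem_inter.2 ⟨mem_backups.2 hj, hjD⟩)
    have hcommon : ∀ m ∉ ζ, gAux A 0 ζ m = maj default ((backupList ζ).map (A.w ζ)) :=
      fun m hm => by
        rw [gAux_zero A hm]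
        refine congrArg _ (List.map_congr_left fun j hj => ?_)
        have hj := mem_backupList.1 hj
        exact A.ite_u_eq_w hζ hm hj (Or.inl (hhonest j hj))
    rw [hcommon i hi, hcommon i' hi']
  | succ k ih =>
    have honest_entry : ∀ j ∉ ζ, j ∉ D → ∀ m ∉ ζ, m ∉ D →
        (if j = m then A.w ζ m else gAux A k (ζ ++ [j]) m) = A.w ζ j := by
      intro j hj hjD m hm hmD
      split_ifs with hjm
      · rw [hjm]
      · exact (honestPrimaryValidity A k).gAux_append hζ hk hmaj hj hjD hm (Ne.symm hjm) hmD
    rw [gAux_succ, gAux_succ]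
    refine congrArg _ (List.map_congr_left fun j hj => ?_)
    rw [mem_backupList] at hj
    by_cases hjD : j ∈ D
    · have hpos : 0 < #(backups ζ ∩ D) := card_pos.2 ⟨j, mem_inter.2 ⟨mem_backups.2 hj, hjD⟩⟩
      rw [if_neg (ne_of_mem_of_not_mem hjD hiD), if_neg (ne_of_mem_of_not_mem hjD hi'D)]
      refine ih (isRoute_append_singleton hζ hj (by omega)) (by simp; omega) ?_ ?_
        (by simp [hi, (ne_of_mem_of_not_mem hjD hiD).symm])
        (by simp [hi', (ne_of_mem_of_not_mem hjD hi'D).symm])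
      · rw [card_backups_append_singleton_inter_of_mem hj hjD]
        omega
      · rw [card_backups_append_singleton_inter_of_mem hj hjD, card_backups_append_singleton hj]
        omega
    · rw [honest_entry j hj hjD i hi hiD, honest_entry j hj hjD i' hi' hi'D]

end Gathering

theorem consensus_fault_tolerance_general
    {n f : ℕ} {S : Fin n} {D : Finset (Fin n)} {M : Type*} [LinearOrder M] [Inhabited M]
    (hf : 1 ≤ f) (hnf : 2 * f + 1 ≤ n) (hD : D.card = f)
    (A : Adversary n f S D M) :
    (∀ i i' : Fin n, i ∉ D → i' ∉ D → i ≠ S → i' ≠ S → g A [S] i = g A [S] i') ∧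
    (S ∉ D → ∀ i : Fin n, i ∉ D → i ≠ S → g A [S] i = A.w [S] i) := by
  have hS : IsRoute n f S [S] := ⟨List.nodup_singleton S, rfl, le_rfl, hf⟩
  have hk : [S].length + (f - 1) = f := by simp only [List.length_singleton]; omega
  have hbackups : #(backups [S]) = n - 1 := by simp [backups, card_compl]
  have hdishonest : backups [S] ∩ D = D.erase S := by ext; simp
  have hnotMem : ∀ {i : Fin n}, i ≠ S → i ∉ [S] := by simp
  have honest : S ∉ D → HonestPrimary D [S] := fun hSD => by simpa [HonestPrimary]
  have validity : S ∉ D → ∀ i : Fin n, i ∉ D → i ≠ S → g A [S] i = A.w [S] i := by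
    intro hSD i hiD hiS
    refine honestPrimaryValidity A (f - 1) [S] _ hS hk ?_ (honest hSD)
      (fun j hj => A.A1 [S] hS (honest hSD) j i hj (hnotMem hiS)) i (hnotMem hiS) hiD
    rw [hbackups, hdishonest, erase_eq_of_notMem hSD]
    omega
  refine ⟨fun i i' hiD hi'D hiS hi'S => ?_, validity⟩
  by_cases hSD : S ∈ D
  · have hcard : #(backups [S] ∩ D) = f - 1 := by rw [hdishonest, card_erase_of_mem hSD, hD]
    exact gAux_agree A (f - 1) hS hk hcard.le (by omega) (hnotMem hiS) (hnotMem hi'S) hiD hi'D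
  · rw [validity hSD i hiD hiS, validity hSD i' hi'D hi'S]
    exact A.A1 [S] hS (honest hSD) i i' (hnotMem hiS) (hnotMem hi'S)

/-- **Fault tolerance `n ≥ 2f + 1` (Theorem 1).**
Assume `n ≥ 2f + 1` and the set `D` of dishonest players has exactly `f` elements.
Then for every adversary assignment `(w, u)` satisfying (A1)–(A4):
(IC1) any two honest players `i, i'` distinct from `S` have equal outputs
`g([S], i) = g([S], i')`; and (IC2) if moreover the initial primary `S` is honest,
then `g([S], i) = m_S = w([S], i)` for every honest player `i ≠ S`, where `w([S], i)`
is `S`'s common multicast value.  That is, the quantum Byzantine agreement protocol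
reaches consensus with fault tolerance `n ≥ 2f + 1`. -/
theorem consensus_fault_tolerance
    {n f : ℕ} {S : Fin n} {D : Finset (Fin n)} {M : Type*} [LinearOrder M] [Inhabited M]
    (hn : 2 ≤ n) (hf : 1 ≤ f) (hnf : 2 * f + 1 ≤ n) (hD : D.card = f)
    (A : Adversary n f S D M) :
    (∀ i i' : Fin n, i ∉ D → i' ∉ D → i ≠ S → i' ≠ S → g A [S] i = g A [S] i') ∧
    (S ∉ D → ∀ i : Fin n, i ∉ D → i ≠ S → g A [S] i = A.w [S] i) :=
  consensus_fault_tolerance_general hf hnf hD A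

end QBA
end

section
/- (Lemma 2.) Suppose M contains two distinct elements m1 ≠ m2. Let ζ be a route whose primary is honest, and let p and r be two distinct dishonest backups of ζ such that ζ ++ [p, r] is a route. Then there exists an adversary assignment (w, u) satisfying (A1)-(A4) such that w(ζ, i) = m1 for every backup i of ζ, while w(ζ ++ [p, r], i) = m2 for every honest backup i of ζ ++ [p, r]; that is, the messages multicast two rounds below an honest node, through two consecutive dishonest primaries, can be totally inconsistent with the honest node's message. -/
namespace QBA

/-!
The adversary lets every message depend only on the route: it is `m2` on the routes extending
`ζ ++ [p, r]` and `m1` on all others.  Then (A1) and (A4) hold trivially, and the value changes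
along a one-step extension only from `ζ ++ [p]` to `ζ ++ [p, r]`.  That step escapes (A2) because
the new primary `r` is dishonest, and escapes (A3) because the old primary `p` is dishonest.
-/

section SwitchAt

variable {α M : Type*} [DecidableEq α]

def switchAt (τ : List α) (m₁ m₂ : M) (η : List α) : M :=
  if τ <+: η then m₂ else m₁

theorem switchAt_self (τ : List α) (m₁ m₂ : M) : switchAt τ m₁ m₂ τ = m₂ :=
  if_pos (List.prefix_refl τ)

theorem switchAt_of_length_lt {τ η : List α} (m₁ m₂ : M) (h : η.length < τ.length) :
    switchAt τ m₁ m₂ η = m₁ :=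
  if_neg fun hτ => (hτ.length_le.trans_lt h).false

theorem switchAt_append_singleton {τ η : List α} {q : α} (m₁ m₂ : M) (h : η ++ [q] ≠ τ) :
    switchAt τ m₁ m₂ (η ++ [q]) = switchAt τ m₁ m₂ η := by
  simp only [switchAt, List.prefix_concat_iff, Ne.symm h, false_or]

end SwitchAt

theorem _root_.List.append_singleton_eq_append_pair_iff {α : Type*} {η ζ : List α} {q p r : α} :
    η ++ [q] = ζ ++ [p, r] ↔ η = ζ ++ [p] ∧ q = r := by
  rw [show ζ ++ [p, r] = ζ ++ [p] ++ [r] by simp, List.append_singleton_inj]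

def switchAdversary {n f : ℕ} {S : Fin n} {D : Finset (Fin n)} {M : Type*}
    (ζ : List (Fin n)) {p r : Fin n} (hpD : p ∈ D) (hrD : r ∈ D) (m₁ m₂ : M) :
    Adversary n f S D M where
  w η _ := switchAt (ζ ++ [p, r]) m₁ m₂ η
  u η _ _ := switchAt (ζ ++ [p, r]) m₁ m₂ η
  A1 _ _ _ _ _ _ _ := rfl
  A2 η q _ _ hqD _ _ _ := switchAt_append_singleton m₁ m₂ fun h =>
    hqD ((List.append_singleton_eq_append_pair_iff.mp h).2 ▸ hrD)
  A3 η q _ hη _ _ _ _ _ _ := switchAt_append_singleton m₁ m₂ fun h =>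
    hη p (by simp [(List.append_singleton_eq_append_pair_iff.mp h).1]) hpD
  A4 _ _ _ _ _ _ _ _ := rfl

theorem lemma2_consistency_disrupted_general
    {n f : ℕ} {S : Fin n} {D : Finset (Fin n)} {M : Type*}
    (m1 m2 : M)
    (ζ : List (Fin n)) (p r : Fin n)
    (hpD : p ∈ D) (hrD : r ∈ D) :
    ∃ A : Adversary n f S D M,
      (∀ i : Fin n, i ∉ ζ → A.w ζ i = m1) ∧
      (∀ i : Fin n, i ∉ ζ ++ [p, r] → i ∉ D → A.w (ζ ++ [p, r]) i = m2) :=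
  ⟨switchAdversary ζ hpD hrD m1 m2,
    fun _ _ => switchAt_of_length_lt m1 m2 (by simp),
    fun _ _ _ => switchAt_self _ m1 m2⟩

/-- **Lemma 2.** Suppose `M` contains two distinct elements `m1 ≠ m2`.  Let `ζ` be a
route whose primary is honest, and let `p` and `r` be two distinct dishonest backups
of `ζ` such that `ζ ++ [p, r]` is a route.  Then there exists an adversary assignment
`(w, u)` satisfying (A1)–(A4) such that `w(ζ, i) = m1` for every backup `i` of `ζ`,
while `w(ζ ++ [p, r], i) = m2` for every honest backup `i` of `ζ ++ [p, r]`: the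
messages multicast two rounds below an honest node, through two consecutive dishonest
primaries, can be totally inconsistent with the honest node's message. -/
theorem lemma2_consistency_disrupted
    {n f : ℕ} {S : Fin n} {D : Finset (Fin n)} {M : Type*} [LinearOrder M]
    (m1 m2 : M) (hm : m1 ≠ m2)
    (ζ : List (Fin n)) (p r : Fin n)
    (hζ : IsRoute n f S ζ) (hprim : HonestPrimary D ζ)
    (hp : p ∉ ζ) (hpD : p ∈ D) (hr : r ∉ ζ) (hrD : r ∈ D) (hpr : p ≠ r)
    (hroute : IsRoute n f S (ζ ++ [p, r])) :
    ∃ A : Adversary n f S D M,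
      (∀ i : Fin n, i ∉ ζ → A.w ζ i = m1) ∧
      (∀ i : Fin n, i ∉ ζ ++ [p, r] → i ∉ D → A.w (ζ ++ [p, r]) i = m2) :=
  lemma2_consistency_disrupted_general m1 m2 ζ p r hpD hrD

end QBA
end

section
/- (Safe node counting.) Assume n >= 2f+1 and the set D of dishonest players has exactly f elements. Let ζ be a route of depth d (1 ≤ d ≤ f) whose primary is honest and whose first d−1 entries are all dishonest. Then among the backups of ζ there are exactly n − f − 1 honest players and exactly f − d + 1 dishonest players; in particular the honest backups are at least as numerous as the dishonest backups, and strictly more numerous whenever d ≥ 2. -/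
namespace QBA

section Counting

open Finset

variable {α : Type*} [Fintype α] [DecidableEq α] {D : Finset α} {l : List α} {p : α}

theorem filter_notMem_concat_and_mem_eq (hp : p ∉ D) :
    (univ.filter fun j => j ∉ l ++ [p] ∧ j ∈ D) = D \ l.toFinset := by
  ext j
  by_cases hj : j = p
  · subst hj; simp [hp]
  · simp [hj, and_comm]

theorem filter_notMem_concat_and_notMem_eq (hlD : ∀ q ∈ l, q ∈ D) :
    (univ.filter fun j => j ∉ l ++ [p] ∧ j ∉ D) = Dᶜ.erase p := by
  ext j
  simp only [mem_filter, mem_univ, true_and, mem_erase, mem_compl, List.mem_append,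
    List.mem_singleton, not_or]
  exact ⟨fun ⟨⟨_, hjp⟩, hjD⟩ => ⟨hjp, hjD⟩,
    fun ⟨hjp, hjD⟩ => ⟨⟨fun hjl => hjD (hlD j hjl), hjp⟩, hjD⟩⟩

theorem card_filter_notMem_concat_and_mem (hl : l.Nodup) (hlD : ∀ q ∈ l, q ∈ D)
    (hp : p ∉ D) :
    #(univ.filter fun j => j ∉ l ++ [p] ∧ j ∈ D) = #D - l.length := by
  rw [filter_notMem_concat_and_mem_eq hp,
    card_sdiff_of_subset fun q hq => hlD q (List.mem_toFinset.mp hq),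
    List.toFinset_card_of_nodup hl]

theorem card_filter_notMem_concat_and_notMem (hlD : ∀ q ∈ l, q ∈ D) (hp : p ∉ D) :
    #(univ.filter fun j => j ∉ l ++ [p] ∧ j ∉ D) = Fintype.card α - #D - 1 := by
  rw [filter_notMem_concat_and_notMem_eq hlD, card_erase_of_mem (mem_compl.mpr hp), card_compl]

end Counting

theorem safe_node_counting_general
    {n f : ℕ} {S : Fin n} {D : Finset (Fin n)}
    (hnf : 2 * f + 1 ≤ n) (hD : D.card = f)
    (ζ : List (Fin n)) (hζ : IsRoute n f S ζ)
    (hprim : HonestPrimary D ζ) (hpre : ∀ q ∈ ζ.dropLast, q ∈ D) :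
    (Finset.univ.filter fun j : Fin n => j ∉ ζ ∧ j ∉ D).card = n - f - 1 ∧
    (Finset.univ.filter fun j : Fin n => j ∉ ζ ∧ j ∈ D).card = f - ζ.length + 1 ∧
    f - ζ.length + 1 ≤ n - f - 1 ∧
    (2 ≤ ζ.length → f - ζ.length + 1 < n - f - 1) := by
  obtain ⟨hnd, -, hlen, hlenf⟩ := hζ
  obtain ⟨l, p, rfl⟩ : ∃ l p, ζ = l ++ [p] :=
    (List.eq_nil_or_concat' ζ).resolve_left (by rintro rfl; simp at hlen)
  have hp : p ∉ D := hprim p (by simp)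
  have hlD : ∀ q ∈ l, q ∈ D := by simpa using hpre
  rw [card_filter_notMem_concat_and_notMem hlD hp, card_filter_notMem_concat_and_mem
    (List.nodup_append.mp hnd).1 hlD hp, Fintype.card_fin, hD]
  refine ⟨rfl, ?_⟩
  simp only [List.length_append, List.length_singleton] at hlenf ⊢
  omega

/-- **Safe node counting.** Assume `n ≥ 2f + 1` and the set `D` of dishonest players
has exactly `f` elements.  Let `ζ` be a route of depth `d` (`1 ≤ d ≤ f`) whose primary
is honest and whose first `d − 1` entries are all dishonest.  Then among the backups
of `ζ` there are exactly `n − f − 1` honest players and exactly `f − d + 1` dishonest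
players; in particular the honest backups are at least as numerous as the dishonest
backups, and strictly more numerous whenever `d ≥ 2`. -/
theorem safe_node_counting
    {n f : ℕ} {S : Fin n} {D : Finset (Fin n)}
    (hn : 2 ≤ n) (hf : 1 ≤ f) (hnf : 2 * f + 1 ≤ n) (hD : D.card = f)
    (ζ : List (Fin n)) (hζ : IsRoute n f S ζ)
    (hprim : HonestPrimary D ζ) (hpre : ∀ q ∈ ζ.dropLast, q ∈ D) :
    (Finset.univ.filter fun j : Fin n => j ∉ ζ ∧ j ∉ D).card = n - f - 1 ∧
    (Finset.univ.filter fun j : Fin n => j ∉ ζ ∧ j ∈ D).card = f - ζ.length + 1 ∧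
    f - ζ.length + 1 ≤ n - f - 1 ∧
    (2 ≤ ζ.length → f - ζ.length + 1 < n - f - 1) :=
  safe_node_counting_general hnf hD ζ hζ hprim hpre

end QBA
end

section
/- (Bottom layer with honest primary.) Let ζ be a route of depth f whose primary is honest. Then for every adversary assignment (w, u) satisfying (A1)-(A4) and every honest backup i of ζ, every element of i's bottom gathering list (namely w(ζ, i) and u(ζ, j, i) for every backup j ≠ i) equals the common multicast value w(ζ, i); consequently g(ζ, i) = w(ζ, i), and all honest backups of ζ obtain the same gathering value. -/
namespace QBA

/- The honest primary multicasts a single value (A1), and (A4) makes every forwarder relay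
that value faithfully, so the bottom gathering list is constant. -/

lemma maj_eq_of_forall_eq {M : Type*} [LinearOrder M] (d m : M) {L : List M}
    (hne : L ≠ []) (hL : ∀ x ∈ L, x = m) : maj d L = m := by
  have hset : L.toFinset = {m} := by
    obtain ⟨a, ha⟩ := List.exists_mem_of_ne_nil L hne
    ext x
    simp only [List.mem_toFinset, Finset.mem_singleton]
    exact ⟨hL x, fun hx => hx ▸ hL a ha ▸ ha⟩
  simp [maj, hset, Finset.filter_singleton]

namespace Adversary

variable {n f : ℕ} {S : Fin n} {D : Finset (Fin n)} {M : Type*}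
  (A : Adversary n f S D M) {ζ : List (Fin n)}

lemma u_eq_w_of_honestPrimary (hζ : IsRoute n f S ζ) (hprim : HonestPrimary D ζ)
    {i j : Fin n} (hi : i ∉ ζ) (hj : j ∉ ζ) (hji : j ≠ i) : A.u ζ j i = A.w ζ i :=
  (A.A4 ζ j i hζ hj hi hji.symm (Or.inr hprim)).trans (A.A1 ζ hζ hprim j i hj hi)

lemma g_eq_w_of_length_eq [LinearOrder M] [Inhabited M] (hζ : IsRoute n f S ζ)
    (hlen : ζ.length = f) (hprim : HonestPrimary D ζ) {i : Fin n} (hi : i ∉ ζ) :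
    g A ζ i = A.w ζ i := by
  rw [g, hlen, Nat.sub_self, gAux]
  refine maj_eq_of_forall_eq _ _ (List.cons_ne_nil _ _) ?_
  simp only [List.mem_cons, List.mem_map, List.mem_filter, decide_eq_true_eq]
  rintro x (rfl | ⟨j, ⟨-, hj, hji⟩, rfl⟩)
  · rfl
  · exact A.u_eq_w_of_honestPrimary hζ hprim hi hj hji

end Adversary

theorem bottom_layer_honest_primary_general
    {n f : ℕ} {S : Fin n} {D : Finset (Fin n)} {M : Type*} [LinearOrder M] [Inhabited M]
    (A : Adversary n f S D M) (ζ : List (Fin n))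
    (hζ : IsRoute n f S ζ) (hlen : ζ.length = f) (hprim : HonestPrimary D ζ)
    (i : Fin n) (hi : i ∉ ζ) :
    (∀ j : Fin n, j ∉ ζ → j ≠ i → A.u ζ j i = A.w ζ i) ∧
    g A ζ i = A.w ζ i ∧
    (∀ i' : Fin n, i' ∉ ζ → i' ∉ D → g A ζ i' = g A ζ i) := by
  refine ⟨fun j hj hji => A.u_eq_w_of_honestPrimary hζ hprim hi hj hji,
    A.g_eq_w_of_length_eq hζ hlen hprim hi, fun i' hi' _ => ?_⟩
  rw [A.g_eq_w_of_length_eq hζ hlen hprim hi, A.g_eq_w_of_length_eq hζ hlen hprim hi']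
  exact A.A1 ζ hζ hprim i' i hi' hi

/-- **Bottom layer with honest primary.** Let `ζ` be a route of depth `f` whose
primary is honest.  Then for every adversary assignment `(w, u)` satisfying
(A1)–(A4) and every honest backup `i` of `ζ`, every element of `i`'s bottom gathering
list (namely `w(ζ, i)` and `u(ζ, j, i)` for every backup `j ≠ i`) equals the common
multicast value `w(ζ, i)`; consequently `g(ζ, i) = w(ζ, i)`, and all honest backups
of `ζ` obtain the same gathering value. -/
theorem bottom_layer_honest_primary
    {n f : ℕ} {S : Fin n} {D : Finset (Fin n)} {M : Type*} [LinearOrder M] [Inhabited M]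
    (A : Adversary n f S D M) (ζ : List (Fin n))
    (hζ : IsRoute n f S ζ) (hlen : ζ.length = f) (hprim : HonestPrimary D ζ)
    (i : Fin n) (hi : i ∉ ζ) (hiH : i ∉ D) :
    (∀ j : Fin n, j ∉ ζ → j ≠ i → A.u ζ j i = A.w ζ i) ∧
    g A ζ i = A.w ζ i ∧
    (∀ i' : Fin n, i' ∉ ζ → i' ∉ D → g A ζ i' = g A ζ i) :=
  bottom_layer_honest_primary_general A ζ hζ hlen hprim i hi

end QBA
end

section
/- (Bottom layer with dishonest primary after an honest node.) Let ζ ++ [p] be a route of depth f where p is dishonest and the primary of ζ is honest, and set m1 = w(ζ, p). Assume the honest backups of ζ ++ [p] strictly outnumber its dishonest backups. Then for every adversary assignment (w, u) satisfying (A1)-(A4) and every honest backup i of ζ ++ [p], one has g(ζ ++ [p], i) = m1. -/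
/-! At the bottom layer the vote list of `i` is its own accepted value followed by the values
forwarded to it. By (A3) every honest backup of `ζ ++ [p]` accepted `w(ζ, p)`, and by (A4) honest
forwarders pass on what they accepted, so `w(ζ, p)` collects one vote per honest backup (the one of
`i` itself through its own accepted value), while any other message collects at most one vote per
dishonest backup. -/

namespace QBA

theorem maj_eq_of_count_lt {M : Type*} [LinearOrder M] (d : M) {L : List M} {m : M}
    (hm : m ∈ L) (h : ∀ m', m' ≠ m → L.count m' < L.count m) :
    maj d L = m := by
  set s := L.toFinset.filter fun x => ∀ m' ∈ L.toFinset, L.count m' ≤ L.count x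
  have hms : m ∈ s := Finset.mem_filter.2 ⟨List.mem_toFinset.2 hm, fun m' _ =>
    (eq_or_ne m' m).elim (fun h' => h' ▸ le_rfl) fun h' => (h m' h').le⟩
  have hmin := (Finset.mem_filter.1 (s.min'_mem ⟨m, hms⟩)).2 m (List.mem_toFinset.2 hm)
  rw [maj, dif_pos ⟨m, hms⟩]
  by_contra hne
  exact (h _ hne).not_ge hmin

section Votes

variable {α M : Type*} {l : List α} {φ : α → M} {m : M} {P : α → Prop}
  [DecidablePred P]

theorem countP_le_count_map [DecidableEq M] (hφ : ∀ j ∈ l, P j → φ j = m) :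
    l.countP (P ·) ≤ (l.map φ).count m := by
  rw [List.count_eq_countP, List.countP_map]
  exact List.countP_mono_left fun j hj hPj => by simp [hφ j hj (of_decide_eq_true hPj)]

theorem count_map_le_countP_not [DecidableEq M] (hφ : ∀ j ∈ l, P j → φ j = m) {m' : M}
    (hm' : m' ≠ m) :
    (l.map φ).count m' ≤ l.countP (¬P ·) := by
  rw [List.count_eq_countP, List.countP_map]
  refine List.countP_mono_left fun j hj hφj => decide_eq_true fun hPj => hm' ?_
  exact (beq_iff_eq.1 (hφ j hj hPj ▸ hφj)).symm

theorem maj_cons_map_eq [LinearOrder M] (d : M) (hφ : ∀ j ∈ l, P j → φ j = m)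
    (h : l.countP (¬P ·) < l.countP (P ·) + 1) :
    maj d (m :: l.map φ) = m := by
  refine maj_eq_of_count_lt d List.mem_cons_self fun m' hm' => ?_
  rw [List.count_cons_of_ne (Ne.symm hm'), List.count_cons_self]
  have hother := count_map_le_countP_not hφ hm'
  have hsupport := countP_le_count_map hφ
  omega

end Votes

theorem countP_filter_finRange {n : ℕ} (P Q : Fin n → Prop) [DecidablePred P]
    [DecidablePred Q] :
    ((List.finRange n).filter (P ·)).countP (Q ·) =
      (Finset.univ.filter fun j => P j ∧ Q j).card := by
  rw [List.countP_eq_length_filter, List.filter_filter, Finset.card, Finset.filter_val,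
    Fin.univ_def]
  simp [Multiset.filter_coe, Bool.and_comm]

section Gathering

variable {n f : ℕ} {S : Fin n} {D : Finset (Fin n)} {M : Type*} [LinearOrder M] [Inhabited M]

theorem g_eq_maj_of_length_eq (A : Adversary n f S D M) {ζ : List (Fin n)} (hlen : ζ.length = f)
    (i : Fin n) :
    g A ζ i = maj default (A.w ζ i ::
      (((List.finRange n).filter fun j => decide (j ∉ ζ ∧ j ≠ i)).map fun j => A.u ζ j i)) := by
  rw [g, hlen, Nat.sub_self, gAux]

theorem g_eq_of_length_eq_of_honest_backups_agree (A : Adversary n f S D M)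
    {ζ : List (Fin n)} (hζ : IsRoute n f S ζ) (hlen : ζ.length = f) {m : M}
    (hw : ∀ j, j ∉ ζ → j ∉ D → A.w ζ j = m)
    (hmaj : (Finset.univ.filter fun j : Fin n => j ∉ ζ ∧ j ∈ D).card <
            (Finset.univ.filter fun j : Fin n => j ∉ ζ ∧ j ∉ D).card)
    {i : Fin n} (hi : i ∉ ζ) (hiH : i ∉ D) :
    g A ζ i = m := by
  rw [g_eq_maj_of_length_eq A hlen, hw i hi hiH]
  have hu : ∀ j ∈ (List.finRange n).filter (fun j => decide (j ∉ ζ ∧ j ≠ i)), j ∉ D →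
      A.u ζ j i = m := by
    intro j hj hjD
    obtain ⟨hjζ, hji⟩ : j ∉ ζ ∧ j ≠ i := by simpa using hj
    rw [A.A4 ζ j i hζ hjζ hi hji.symm (Or.inl hjD), hw j hjζ hjD]
  refine maj_cons_map_eq default hu ?_
  rw [countP_filter_finRange, countP_filter_finRange]
  have hdishonest : (Finset.univ.filter fun j => (j ∉ ζ ∧ j ≠ i) ∧ ¬j ∉ D).card ≤
      (Finset.univ.filter fun j : Fin n => j ∉ ζ ∧ j ∈ D).card :=
    Finset.card_le_card fun j => by simp +contextual
  have hhonest : (Finset.univ.filter fun j : Fin n => j ∉ ζ ∧ j ∉ D).card ≤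
      (insert i (Finset.univ.filter fun j => (j ∉ ζ ∧ j ≠ i) ∧ j ∉ D)).card :=
    Finset.card_le_card fun j => by by_cases j = i <;> simp_all
  have hinsert := Finset.card_insert_le i (Finset.univ.filter fun j => (j ∉ ζ ∧ j ≠ i) ∧ j ∉ D)
  omega

end Gathering

/-- **Bottom layer with dishonest primary after an honest node.** Let `ζ ++ [p]` be a
route of depth `f` where `p` is dishonest and the primary of `ζ` is honest, and set
`m1 = w(ζ, p)`.  Assume the honest backups of `ζ ++ [p]` strictly outnumber its
dishonest backups.  Then for every adversary assignment `(w, u)` satisfying (A1)–(A4)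
and every honest backup `i` of `ζ ++ [p]`, one has `g(ζ ++ [p], i) = m1 = w(ζ, p)`. -/
theorem bottom_layer_dishonest_primary
    {n f : ℕ} {S : Fin n} {D : Finset (Fin n)} {M : Type*} [LinearOrder M] [Inhabited M]
    (A : Adversary n f S D M) (ζ : List (Fin n)) (p : Fin n)
    (hζ : IsRoute n f S ζ) (hprim : HonestPrimary D ζ) (hpD : p ∈ D)
    (hroute : IsRoute n f S (ζ ++ [p])) (hlen : (ζ ++ [p]).length = f)
    (hmaj : (Finset.univ.filter fun j : Fin n => j ∉ ζ ++ [p] ∧ j ∈ D).card <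
            (Finset.univ.filter fun j : Fin n => j ∉ ζ ++ [p] ∧ j ∉ D).card)
    (i : Fin n) (hi : i ∉ ζ ++ [p]) (hiH : i ∉ D) :
    g A (ζ ++ [p]) i = A.w ζ p := by
  have hpζ : p ∉ ζ := (List.nodup_cons.1 (List.nodup_append_comm.1 hroute.1)).1
  exact g_eq_of_length_eq_of_honest_backups_agree A hroute hlen
    (A.A3 ζ p hζ hprim hpζ hpD hroute) hmaj hi hiH

end QBA
end
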